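/- (Cholesky decomposition compatible with all leading Schur complements.) Given a positive semidefinite n×n operator matrix M, there is a lower triangular operator matrix P with M = P*P such that for every k with 0 ≤ k ≤ n-1, if P_k denotes the truncation of P to the upper-left (k+1)×(k+1) corner then S(M; {0,…,k}) = P_k* P_k, and moreover closure(ran P) = ⊕_{j=0}^{n-1} closure(ran P_{jj}). -/

import Mathlib

open scoped InnerProductSpace
open ContinuousLinearMap

set_option maxHeartbeats 2000000
set_option synthInstance.maxHeartbeats 2000000
set_option linter.unusedSectionVars false
set_option linter.unusedVariables false

section Douglas

variable {E F : Type*} [NormedAddCommGroup E] [InnerProductSpace ℂ E] [CompleteSpace E]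
  [NormedAddCommGroup F] [InnerProductSpace ℂ F] [CompleteSpace F]

/-- closure of the range of an operator, as a submodule -/
noncomputable def rcl (s : E →L[ℂ] E) : Submodule ℂ E :=
  (LinearMap.range (s : E →ₗ[ℂ] E)).topologicalClosure

theorem mem_rcl_self (s : E →L[ℂ] E) (x : E) : s x ∈ rcl s :=
  Submodule.le_topologicalClosure _ ⟨x, rfl⟩

theorem rcl_closed (s : E →L[ℂ] E) : IsClosed (rcl s : Set E) :=
  Submodule.isClosed_topologicalClosure _

theorem rcl_coe (s : E →L[ℂ] E) : (rcl s : Set E) = closure (Set.range s) := by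
  rw [rcl, Submodule.topologicalClosure_coe, LinearMap.coe_range]
  rfl

theorem rcl_approx (s : E →L[ℂ] E) {u : E} (hu : u ∈ rcl s) {ε : ℝ} (hε : 0 < ε) :
    ∃ x : E, ‖s x - u‖ < ε := by
  have : u ∈ closure (Set.range s) := by rw [← rcl_coe]; exact hu
  rcases Metric.mem_closure_iff.1 this ε hε with ⟨y, ⟨x, rfl⟩, hy⟩
  exact ⟨x, by rwa [← norm_sub_rev, ← dist_eq_norm]⟩

theorem douglas_exists (s : E →L[ℂ] E) (hs : IsSelfAdjoint s) (b : F →L[ℂ] E)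
    (κ : ℝ) (hb : ∀ y, ‖b.adjoint y‖ ≤ κ * ‖s y‖) :
    ∃ C : F →L[ℂ] E, s ∘L C = b ∧ ∀ x, C x ∈ rcl s := by
  classical
  set R : Submodule ℂ E := LinearMap.range (s : E →ₗ[ℂ] E) with hR
  set K : Submodule ℂ E := rcl s with hK
  haveI : CompleteSpace K := (rcl_closed s).completeSpace_coe
  have hker : LinearMap.ker (s : E →ₗ[ℂ] E) ≤ LinearMap.ker (b.adjoint : E →ₗ[ℂ] F) := by
    intro y hy
    have hy' : s y = 0 := hy
    have h2 := hb y
    rw [hy', norm_zero, mul_zero] at h2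
    exact norm_le_zero_iff.1 h2
  set q := (LinearMap.quotKerEquivRange (s : E →ₗ[ℂ] E)).symm
  set D₀ : R →ₗ[ℂ] F :=
    ((LinearMap.ker (s : E →ₗ[ℂ] E)).liftQ (b.adjoint : E →ₗ[ℂ] F) hker).comp
      (q : R →ₗ[ℂ] (E ⧸ LinearMap.ker (s : E →ₗ[ℂ] E))) with hD₀
  have hD₀app : ∀ (z : R) (y : E), (z : E) = s y → D₀ z = b.adjoint y := by
    intro z y h
    have hz : z = ⟨s y, ⟨y, rfl⟩⟩ := Subtype.ext h
    subst hz
    have hq : q ⟨s y, ⟨y, rfl⟩⟩ = Submodule.Quotient.mk y := by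
      rw [LinearEquiv.symm_apply_eq]
      rfl
    simp only [hD₀, LinearMap.comp_apply, LinearEquiv.coe_coe, hq]
    rfl
  have hD₀bound : ∀ z : R, ‖D₀ z‖ ≤ max κ 0 * ‖z‖ := by
    rintro ⟨z, y, rfl⟩
    rw [hD₀app ⟨(s : E →ₗ[ℂ] E) y, ⟨y, rfl⟩⟩ y rfl]
    calc ‖b.adjoint y‖ ≤ κ * ‖s y‖ := hb y
      _ ≤ max κ 0 * ‖s y‖ := by gcongr; exact le_max_left _ _
      _ = max κ 0 * ‖(⟨(s : E →ₗ[ℂ] E) y, ⟨y, rfl⟩⟩ : R)‖ := rfl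
  set D : R →L[ℂ] F := LinearMap.mkContinuous D₀ (max κ 0) hD₀bound with hD
  have hDapp : ∀ (z : R) (y : E), (z : E) = s y → D z = b.adjoint y := hD₀app
  have hRK : R ≤ K := Submodule.le_topologicalClosure _
  set e₀ : R →ₗ[ℂ] K := Submodule.inclusion hRK with he₀
  have he₀norm : ∀ z : R, ‖e₀ z‖ = ‖z‖ := fun z => rfl
  set e : R →L[ℂ] K := LinearMap.mkContinuous e₀ 1 (fun z => by rw [he₀norm, one_mul]) with he
  have he_iso : Isometry e := AddMonoidHomClass.isometry_of_norm e he₀norm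
  have he_dense : DenseRange e := by
    intro x
    rw [Metric.mem_closure_iff]
    intro ε hε
    have hx : (x : E) ∈ closure (R : Set E) := by
      have h2 : (x : E) ∈ (R.topologicalClosure : Set E) := x.2
      rwa [Submodule.topologicalClosure_coe] at h2
    rcases Metric.mem_closure_iff.1 hx ε hε with ⟨y, hyR, hy⟩
    refine ⟨e ⟨y, hyR⟩, ⟨⟨y, hyR⟩, rfl⟩, ?_⟩
    rw [Subtype.dist_eq]
    exact hy
  set Dbar : K →L[ℂ] F := D.extend e with hDbar
  have hDbar_eq : ∀ z : R, Dbar (e z) = D z := fun z =>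
    ContinuousLinearMap.extend_eq D he_dense he_iso.isUniformInducing z
  set Cstar : E →L[ℂ] F := Dbar ∘L (K.orthogonalProjectionOnto : E →L[ℂ] K) with hCstar
  have hCstar_s : ∀ y : E, Cstar (s y) = b.adjoint y := by
    intro y
    have hmem : s y ∈ K := mem_rcl_self s y
    have hproj : K.orthogonalProjectionOnto (s y) = ⟨s y, hmem⟩ :=
      Submodule.orthogonalProjectionOnto_mem_subspace_eq_self (⟨s y, hmem⟩ : K)
    have hey : (⟨s y, hmem⟩ : K) = e ⟨s y, ⟨y, rfl⟩⟩ := rfl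
    calc Cstar (s y) = Dbar (K.orthogonalProjectionOnto (s y)) := rfl
      _ = Dbar (e ⟨s y, ⟨y, rfl⟩⟩) := by rw [hproj, hey]
      _ = D ⟨s y, ⟨y, rfl⟩⟩ := hDbar_eq _
      _ = b.adjoint y := hDapp _ y rfl
  have hcomp : Cstar ∘L s = b.adjoint := ContinuousLinearMap.ext fun y => hCstar_s y
  refine ⟨Cstar.adjoint, ?_, ?_⟩
  · have h1 : (Cstar ∘L s).adjoint = (b.adjoint).adjoint := by rw [hcomp]
    rw [ContinuousLinearMap.adjoint_comp, hs.adjoint_eq, ContinuousLinearMap.adjoint_adjoint] at h1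
    exact h1
  · intro x
    have horth : Cstar.adjoint x ∈ Kᗮᗮ := by
      rw [Submodule.mem_orthogonal]
      intro u hu
      have hproj0 : K.orthogonalProjectionOnto u = 0 :=
        Submodule.orthogonalProjectionOnto_apply_of_mem_orthogonal hu
      have hCu : Cstar u = 0 := by
        calc Cstar u = Dbar (K.orthogonalProjectionOnto u) := rfl
          _ = Dbar 0 := by rw [hproj0]
          _ = 0 := map_zero _
      calc ⟪u, Cstar.adjoint x⟫_ℂ = ⟪Cstar u, x⟫_ℂ :=
            ContinuousLinearMap.adjoint_inner_right Cstar u x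
        _ = 0 := by rw [hCu, inner_zero_left]
    rwa [Submodule.orthogonal_orthogonal] at horth

open scoped Classical in
/-- the canonical (reduced) Douglas solution -/
noncomputable def dsol (s : E →L[ℂ] E) (b : F →L[ℂ] E) : F →L[ℂ] E :=
  if h : ∃ C : F →L[ℂ] E, s ∘L C = b ∧ ∀ x, C x ∈ rcl s then h.choose else 0

theorem dsol_spec (s : E →L[ℂ] E) (hs : IsSelfAdjoint s) (b : F →L[ℂ] E)
    (κ : ℝ) (hb : ∀ y, ‖b.adjoint y‖ ≤ κ * ‖s y‖) :
    s ∘L dsol s b = b ∧ ∀ x, dsol s b x ∈ rcl s := by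
  classical
  have h := douglas_exists s hs b κ hb
  rw [dsol, dif_pos h]
  exact h.choose_spec

theorem dsol_unique (s : E →L[ℂ] E) (hs : IsSelfAdjoint s) (b : F →L[ℂ] E)
    (κ : ℝ) (hb : ∀ y, ‖b.adjoint y‖ ≤ κ * ‖s y‖)
    (C : F →L[ℂ] E) (h1 : s ∘L C = b) (h2 : ∀ x, C x ∈ rcl s) :
    dsol s b = C := by
  obtain ⟨g1, g2⟩ := dsol_spec s hs b κ hb
  ext x
  have hz1 : s (dsol s b x - C x) = 0 := by
    have : s (dsol s b x) = s (C x) := by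
      have e1 : s (dsol s b x) = b x := by rw [← ContinuousLinearMap.comp_apply, g1]
      have e2 : s (C x) = b x := by rw [← ContinuousLinearMap.comp_apply, h1]
      rw [e1, e2]
    rw [map_sub, this, sub_self]
  have hz2 : dsol s b x - C x ∈ rcl s := sub_mem (g2 x) (h2 x)
  have horth : ∀ w : E, ⟪dsol s b x - C x, s w⟫_ℂ = 0 := by
    intro w
    calc ⟪dsol s b x - C x, s w⟫_ℂ = ⟪s.adjoint (dsol s b x - C x), w⟫_ℂ := by
          rw [ContinuousLinearMap.adjoint_inner_left]
      _ = 0 := by rw [hs.adjoint_eq, hz1, inner_zero_left]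
  have hcl : (rcl s : Set E) ⊆ {w | ⟪dsol s b x - C x, w⟫_ℂ = 0} := by
    rw [rcl_coe]
    refine closure_minimal ?_ ?_
    · rintro _ ⟨w, rfl⟩; exact horth w
    · exact isClosed_eq (Continuous.inner continuous_const continuous_id) continuous_const
  have : ⟪dsol s b x - C x, dsol s b x - C x⟫_ℂ = 0 := hcl hz2
  have := inner_self_eq_zero.1 this
  exact sub_eq_zero.1 this

theorem dsol_zero (s : E →L[ℂ] E) (hs : IsSelfAdjoint s) :
    dsol s (0 : F →L[ℂ] E) = 0 := by
  refine dsol_unique s hs 0 0 (fun y => by simp) 0 (by simp) (fun x => by simp [zero_mem])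

/-- square root facts -/
theorem sqrt_selfAdjoint (a : E →L[ℂ] E) : IsSelfAdjoint (CFC.sqrt a) :=
  IsSelfAdjoint.of_nonneg (CFC.sqrt_nonneg a)

theorem sqrt_mul_self (a : E →L[ℂ] E) (ha : a.IsPositive) :
    CFC.sqrt a ∘L CFC.sqrt a = a := by
  have h0 : 0 ≤ a := (ContinuousLinearMap.nonneg_iff_isPositive a).mpr ha
  exact CFC.sqrt_mul_sqrt_self a h0

theorem sqrt_norm_sq (a : E →L[ℂ] E) (ha : a.IsPositive) (y : E) :
    (⟪a y, y⟫_ℂ).re = ‖CFC.sqrt a y‖ ^ 2 := by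
  have h1 : a y = CFC.sqrt a (CFC.sqrt a y) := by
    conv_lhs => rw [← sqrt_mul_self a ha]
    rfl
  rw [h1]
  have h2 : ⟪CFC.sqrt a (CFC.sqrt a y), y⟫_ℂ = ⟪CFC.sqrt a y, CFC.sqrt a y⟫_ℂ := by
    nth_rewrite 1 [← (sqrt_selfAdjoint a).adjoint_eq]
    exact ContinuousLinearMap.adjoint_inner_left (CFC.sqrt a) y (CFC.sqrt a y)
  rw [h2]
  have := inner_self_eq_norm_sq (𝕜 := ℂ) (x := CFC.sqrt a y)
  simpa using this

theorem dsol_diag (a : E →L[ℂ] E) (ha : a.IsPositive) :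
    dsol (CFC.sqrt a) a = CFC.sqrt a := by
  set s := CFC.sqrt a with hsdef
  refine dsol_unique s (sqrt_selfAdjoint a) a ‖s‖ ?_ s (sqrt_mul_self a ha)
    (fun x => mem_rcl_self s x)
  intro y
  have h1 : a.adjoint = a := ha.isSelfAdjoint.adjoint_eq
  rw [h1]
  have h2 : a y = s (s y) := by
    conv_lhs => rw [← sqrt_mul_self a ha]
    rfl
  rw [h2]
  exact s.le_opNorm (s y)

end Douglas


section

variable {n : ℕ} {H : Fin n → Type*} [∀ i, NormedAddCommGroup (H i)]
  [∀ i, InnerProductSpace ℂ (H i)] [∀ i, CompleteSpace (H i)]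

/-- The quadratic form of a block operator matrix on `H 0 ⊕ ⋯ ⊕ H (n-1)`. -/
noncomputable def blockQF (A : ∀ i j, H j →L[ℂ] H i) (v : ∀ i, H i) : ℝ :=
  ∑ i, ∑ j, (⟪A i j (v j), v i⟫_ℂ).re

/-- The block operator matrix `A` is positive semidefinite. -/
def BlockPosSD (A : ∀ i j, H j →L[ℂ] H i) : Prop :=
  (∀ i j, (A i j).adjoint = A j i) ∧ ∀ v, 0 ≤ blockQF A v

/-- `S` is the Schur complement of the positive block operator matrix `A` supported
on the rows and columns in `Λ` (padded with zeros): the maximal positive block matrix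
vanishing outside `Λ × Λ` with `A - S ≥ 0`. -/
def IsSchurBlock (A : ∀ i j, H j →L[ℂ] H i) (Λ : Set (Fin n))
    (S : ∀ i j, H j →L[ℂ] H i) : Prop :=
  BlockPosSD S ∧ (∀ i j, i ∉ Λ ∨ j ∉ Λ → S i j = 0) ∧
    BlockPosSD (fun i j => A i j - S i j) ∧
    ∀ X : ∀ i j, H j →L[ℂ] H i, BlockPosSD X → (∀ i j, i ∉ Λ ∨ j ∉ Λ → X i j = 0) →
      BlockPosSD (fun i j => A i j - X i j) → ∀ v, blockQF X v ≤ blockQF S v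

theorem blockQF_congr {A B : ∀ i j, H j →L[ℂ] H i} (h : ∀ i j, A i j = B i j) (v : ∀ i, H i) :
    blockQF A v = blockQF B v := by
  unfold blockQF
  exact Finset.sum_congr rfl fun i _ => Finset.sum_congr rfl fun j _ => by rw [h i j]

theorem blockQF_sub (A B : ∀ i j, H j →L[ℂ] H i) (v : ∀ i, H i) :
    blockQF (fun i j => A i j - B i j) v = blockQF A v - blockQF B v := by
  unfold blockQF
  rw [← Finset.sum_sub_distrib]
  refine Finset.sum_congr rfl fun i _ => ?_
  rw [← Finset.sum_sub_distrib]
  refine Finset.sum_congr rfl fun j _ => ?_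
  rw [ContinuousLinearMap.sub_apply, inner_sub_left, Complex.sub_re]

theorem blockQF_sum {ι : Type*} (t : Finset ι) (M : ι → ∀ i j, H j →L[ℂ] H i) (v : ∀ i, H i) :
    blockQF (fun i j => ∑ l ∈ t, M l i j) v = ∑ l ∈ t, blockQF (M l) v := by
  unfold blockQF
  have h1 : ∀ (i j : Fin n), (⟪(∑ l ∈ t, M l i j) (v j), v i⟫_ℂ).re
      = ∑ l ∈ t, (⟪M l i j (v j), v i⟫_ℂ).re := by
    intro i j
    rw [ContinuousLinearMap.sum_apply, sum_inner, Complex.re_sum]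
  simp_rw [h1]
  calc ∑ i, ∑ j, ∑ l ∈ t, (⟪M l i j (v j), v i⟫_ℂ).re
      = ∑ i, ∑ l ∈ t, ∑ j, (⟪M l i j (v j), v i⟫_ℂ).re :=
        Finset.sum_congr rfl fun i _ => Finset.sum_comm
    _ = ∑ l ∈ t, ∑ i, ∑ j, (⟪M l i j (v j), v i⟫_ℂ).re := Finset.sum_comm

theorem blockQF_rowTerm {k : Fin n} (R : ∀ j, H j →L[ℂ] H k) (v : ∀ i, H i) :
    blockQF (fun i j => (R i).adjoint ∘L (R j)) v = ‖∑ j, R j (v j)‖ ^ 2 := by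
  unfold blockQF
  have h1 : ∀ i j, (⟪((R i).adjoint ∘L (R j)) (v j), v i⟫_ℂ).re
      = (⟪R j (v j), R i (v i)⟫_ℂ).re := by
    intro i j
    rw [ContinuousLinearMap.comp_apply, ContinuousLinearMap.adjoint_inner_left]
  calc ∑ i, ∑ j, (⟪((R i).adjoint ∘L (R j)) (v j), v i⟫_ℂ).re
      = ∑ i, ∑ j, (⟪R j (v j), R i (v i)⟫_ℂ).re := by
        exact Finset.sum_congr rfl fun i _ => Finset.sum_congr rfl fun j _ => h1 i j
    _ = ∑ i, (⟪∑ j, R j (v j), R i (v i)⟫_ℂ).re := by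
        refine Finset.sum_congr rfl fun i _ => ?_
        rw [sum_inner, Complex.re_sum]
    _ = (⟪∑ j, R j (v j), ∑ i, R i (v i)⟫_ℂ).re := by rw [inner_sum, Complex.re_sum]
    _ = ‖∑ j, R j (v j)‖ ^ 2 := by
        have := inner_self_eq_norm_sq (𝕜 := ℂ) (x := ∑ j, R j (v j))
        simpa using this

theorem sum_collapse_single {k : Fin n} {α : Type*} [AddCommMonoid α]
    (f : ∀ i', H i' → α) (hf : ∀ i', f i' 0 = 0) (x : H k) :
    ∑ i', f i' (Pi.single k x i') = f k x := by
  rw [Finset.sum_eq_single k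
    (fun i' _ hne => by rw [Pi.single_eq_of_ne hne, hf]) (by simp)]
  rw [Pi.single_eq_same]

theorem blockQF_two (B : ∀ i j, H j →L[ℂ] H i) (k j : Fin n) (y : H k) (x : H j) :
    blockQF B (Pi.single k y + Pi.single j x)
      = (⟪B k k y, y⟫_ℂ).re + (⟪B k j x, y⟫_ℂ).re
        + (⟪B j k y, x⟫_ℂ).re + (⟪B j j x, x⟫_ℂ).re := by
  unfold blockQF
  have expand : ∀ i i' : Fin n,
      (⟪B i i' ((Pi.single k y + Pi.single j x) i'), (Pi.single k y + Pi.single j x) i⟫_ℂ)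
      = ⟪B i i' (Pi.single k y i'), Pi.single k y i⟫_ℂ
        + ⟪B i i' (Pi.single j x i'), Pi.single k y i⟫_ℂ
        + ⟪B i i' (Pi.single k y i'), Pi.single j x i⟫_ℂ
        + ⟪B i i' (Pi.single j x i'), Pi.single j x i⟫_ℂ := by
    intro i i'
    rw [Pi.add_apply, Pi.add_apply, map_add, inner_add_left, inner_add_right, inner_add_right]
    ring
  have col1 : ∀ (i : Fin n) (w : H i), ∑ i', ⟪B i i' (Pi.single k y i'), w⟫_ℂ = ⟪B i k y, w⟫_ℂ :=
    fun i w => sum_collapse_single (fun i' z => ⟪B i i' z, w⟫_ℂ) (fun i' => by simp) y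
  have col2 : ∀ (i : Fin n) (w : H i), ∑ i', ⟪B i i' (Pi.single j x i'), w⟫_ℂ = ⟪B i j x, w⟫_ℂ :=
    fun i w => sum_collapse_single (fun i' z => ⟪B i i' z, w⟫_ℂ) (fun i' => by simp) x
  have main : ∑ i, ∑ i', ⟪B i i' ((Pi.single k y + Pi.single j x) i'),
      (Pi.single k y + Pi.single j x) i⟫_ℂ
      = ⟪B k k y, y⟫_ℂ + ⟪B k j x, y⟫_ℂ + ⟪B j k y, x⟫_ℂ + ⟪B j j x, x⟫_ℂ := by
    have step : ∀ i, ∑ i', ⟪B i i' ((Pi.single k y + Pi.single j x) i'),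
        (Pi.single k y + Pi.single j x) i⟫_ℂ
        = ⟪B i k y, Pi.single k y i⟫_ℂ + ⟪B i j x, Pi.single k y i⟫_ℂ
          + ⟪B i k y, Pi.single j x i⟫_ℂ + ⟪B i j x, Pi.single j x i⟫_ℂ := by
      intro i
      simp_rw [expand]
      rw [Finset.sum_add_distrib, Finset.sum_add_distrib, Finset.sum_add_distrib,
        col1 i, col2 i, col1 i, col2 i]
    simp_rw [step]
    rw [Finset.sum_add_distrib, Finset.sum_add_distrib, Finset.sum_add_distrib]
    rw [sum_collapse_single (fun i w => ⟪B i k y, w⟫_ℂ) (fun i => inner_zero_right _) y,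
      sum_collapse_single (fun i w => ⟪B i j x, w⟫_ℂ) (fun i => inner_zero_right _) y,
      sum_collapse_single (fun i w => ⟪B i k y, w⟫_ℂ) (fun i => inner_zero_right _) x,
      sum_collapse_single (fun i w => ⟪B i j x, w⟫_ℂ) (fun i => inner_zero_right _) x]
  calc ∑ i, ∑ i', (⟪B i i' ((Pi.single k y + Pi.single j x) i'),
        (Pi.single k y + Pi.single j x) i⟫_ℂ).re
      = (∑ i, ∑ i', ⟪B i i' ((Pi.single k y + Pi.single j x) i'),
        (Pi.single k y + Pi.single j x) i⟫_ℂ).re := by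
        rw [Complex.re_sum]
        exact Finset.sum_congr rfl fun i _ => by rw [Complex.re_sum]
    _ = _ := by rw [main]; simp

theorem blockQF_sub_single (B : ∀ i j, H j →L[ℂ] H i) (hSA : ∀ i j, (B i j).adjoint = B j i)
    (v : ∀ i, H i) (k : Fin n) (x : H k) :
    blockQF B (fun i => v i - Pi.single k x i)
      = blockQF B v - 2 * (∑ j, ⟪B k j (v j), x⟫_ℂ).re + (⟪B k k x, x⟫_ℂ).re := by
  unfold blockQF
  have expand : ∀ i i',
      ⟪B i i' (v i' - Pi.single k x i'), v i - Pi.single k x i⟫_ℂ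
      = ⟪B i i' (v i'), v i⟫_ℂ - ⟪B i i' (Pi.single k x i'), v i⟫_ℂ
        - ⟪B i i' (v i'), Pi.single k x i⟫_ℂ + ⟪B i i' (Pi.single k x i'), Pi.single k x i⟫_ℂ := by
    intro i i'
    rw [map_sub, inner_sub_left, inner_sub_right, inner_sub_right]
    ring
  have col1 : ∀ (i : Fin n) (w : H i), ∑ i', ⟪B i i' (Pi.single k x i'), w⟫_ℂ = ⟪B i k x, w⟫_ℂ :=
    fun i w => sum_collapse_single (fun i' z => ⟪B i i' z, w⟫_ℂ) (fun i' => by simp) x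
  have hsym : ∑ i, ⟪B i k x, v i⟫_ℂ = starRingEnd ℂ (∑ j, ⟪B k j (v j), x⟫_ℂ) := by
    rw [map_sum]
    refine Finset.sum_congr rfl fun i _ => ?_
    have h1 : ⟪B i k x, v i⟫_ℂ = ⟪x, B k i (v i)⟫_ℂ := by
      rw [← hSA k i]; exact ContinuousLinearMap.adjoint_inner_left _ _ _
    rw [h1]
    exact (inner_conj_symm _ _).symm
  have main : ∑ i, ∑ i', ⟪B i i' (v i' - Pi.single k x i'), v i - Pi.single k x i⟫_ℂ
      = (∑ i, ∑ i', ⟪B i i' (v i'), v i⟫_ℂ) - starRingEnd ℂ (∑ j, ⟪B k j (v j), x⟫_ℂ)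
        - (∑ j, ⟪B k j (v j), x⟫_ℂ) + ⟪B k k x, x⟫_ℂ := by
    have step : ∀ i, ∑ i', ⟪B i i' (v i' - Pi.single k x i'), v i - Pi.single k x i⟫_ℂ
        = (∑ i', ⟪B i i' (v i'), v i⟫_ℂ) - ⟪B i k x, v i⟫_ℂ
          - ⟪B i k x, Pi.single k x i⟫_ℂ
          - (∑ i', ⟪B i i' (v i'), Pi.single k x i⟫_ℂ) + 2 * ⟪B i k x, Pi.single k x i⟫_ℂ := by
      intro i
      simp_rw [expand]
      rw [Finset.sum_add_distrib, Finset.sum_sub_distrib, Finset.sum_sub_distrib,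
        col1 i, col1 i]
      ring
    simp_rw [step]
    rw [Finset.sum_add_distrib, Finset.sum_sub_distrib, Finset.sum_sub_distrib,
      Finset.sum_sub_distrib]
    rw [hsym]
    rw [sum_collapse_single (fun i w => ⟪B i k x, w⟫_ℂ) (fun i => inner_zero_right _) x]
    have c2 : ∑ i, ∑ i', ⟪B i i' (v i'), Pi.single k x i⟫_ℂ = ∑ i', ⟪B k i' (v i'), x⟫_ℂ :=
      sum_collapse_single (fun i w => ∑ i', ⟪B i i' (v i'), w⟫_ℂ)
        (fun i => by simp) x
    rw [c2]
    have c3 : ∑ i, (2 : ℂ) * ⟪B i k x, Pi.single k x i⟫_ℂ = 2 * ⟪B k k x, x⟫_ℂ :=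
      sum_collapse_single (fun i w => (2 : ℂ) * ⟪B i k x, w⟫_ℂ) (fun i => by simp) x
    rw [c3]
    ring
  have lhs_re : ∑ i, ∑ i', (⟪B i i' ((fun i => v i - Pi.single k x i) i'),
      (fun i => v i - Pi.single k x i) i⟫_ℂ).re
      = (∑ i, ∑ i', ⟪B i i' (v i' - Pi.single k x i'), v i - Pi.single k x i⟫_ℂ).re := by
    rw [Complex.re_sum]
    exact Finset.sum_congr rfl fun i _ => by rw [Complex.re_sum]
  rw [lhs_re, main]
  have rhs_re : ∑ i, ∑ i', (⟪B i i' (v i'), v i⟫_ℂ).re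
      = (∑ i, ∑ i', ⟪B i i' (v i'), v i⟫_ℂ).re := by
    rw [Complex.re_sum]
    exact Finset.sum_congr rfl fun i _ => by rw [Complex.re_sum]
  rw [rhs_re]
  simp [Complex.sub_re, Complex.add_re, Complex.conj_re]
  have hflip : ∀ i : Fin n, (⟪x, B k i (v i)⟫_ℂ).re = (⟪B k i (v i), x⟫_ℂ).re := by
    intro i
    rw [← inner_conj_symm, Complex.conj_re]
  simp_rw [hflip]
  ring




theorem inner_self_re {E : Type*} [NormedAddCommGroup E] [InnerProductSpace ℂ E] (u : E) :
    (⟪u, u⟫_ℂ).re = ‖u‖ ^ 2 := by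
  have := inner_self_eq_norm_sq (𝕜 := ℂ) (x := u); simpa using this

theorem diag_isPositive (B : ∀ i j, H j →L[ℂ] H i)
    (hSA : ∀ i j, (B i j).adjoint = B j i) (hPos : ∀ v, 0 ≤ blockQF B v) (k : Fin n) :
    (B k k).IsPositive := by
  constructor
  · rw [← ContinuousLinearMap.isSelfAdjoint_iff_isSymmetric]
    show star (B k k) = B k k
    rw [ContinuousLinearMap.star_eq_adjoint, hSA k k]
  · intro x
    have h := hPos (Pi.single k x + Pi.single k (0 : H k))
    rw [blockQF_two] at h
    simp only [map_zero, inner_zero_left, inner_zero_right, Complex.zero_re, add_zero] at h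
    simpa [ContinuousLinearMap.reApplyInnerSelf] using h

theorem diag_re_nonneg (B : ∀ i j, H j →L[ℂ] H i)
    (hSA : ∀ i j, (B i j).adjoint = B j i) (hPos : ∀ v, 0 ≤ blockQF B v) (k : Fin n)
    (y : H k) : 0 ≤ (⟪B k k y, y⟫_ℂ).re := by
  have h := hPos (Pi.single k y + Pi.single k (0 : H k))
  rw [blockQF_two] at h
  simpa using h

theorem offdiag_bound (B : ∀ i j, H j →L[ℂ] H i)
    (hSA : ∀ i j, (B i j).adjoint = B j i) (hPos : ∀ v, 0 ≤ blockQF B v) (k j : Fin n)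
    (y : H k) :
    ‖(B k j).adjoint y‖ ≤ Real.sqrt ‖B j j‖ * ‖CFC.sqrt (B k k) y‖ := by
  set u := (B k j).adjoint y with hu
  have key : ∀ t : ℝ, 0 ≤ (⟪B k k y, y⟫_ℂ).re - 2 * t * ‖u‖^2
      + t^2 * (⟪B j j u, u⟫_ℂ).re := by
    intro t
    set c : ℂ := ((t : ℝ) : ℂ) with hc
    have h := hPos (Pi.single k y + Pi.single j ((-c) • u))
    rw [blockQF_two] at h
    have huu : ⟪B k j u, y⟫_ℂ = ⟪u, u⟫_ℂ := by
      rw [hu]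
      exact (ContinuousLinearMap.adjoint_inner_right (B k j) u y).symm
    have hby : B j k y = u := by rw [← hSA k j, ← hu]
    have e1 : ⟪B k j ((-c) • u), y⟫_ℂ = (-c) * ⟪u, u⟫_ℂ := by
      rw [map_smul, inner_smul_left, huu]
      congr 1
      rw [map_neg, hc, Complex.conj_ofReal]
    have e2 : ⟪B j k y, (-c) • u⟫_ℂ = (-c) * ⟪u, u⟫_ℂ := by
      rw [inner_smul_right, hby]
    have e3 : ⟪B j j ((-c) • u), (-c) • u⟫_ℂ = c^2 * ⟪B j j u, u⟫_ℂ := by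
      rw [map_smul, inner_smul_left, inner_smul_right, map_neg, hc, Complex.conj_ofReal]
      ring
    rw [e1, e2, e3] at h
    have r1 : ((-c) * ⟪u, u⟫_ℂ).re = -(t * ‖u‖^2) := by
      rw [neg_mul, Complex.neg_re, hc, Complex.re_ofReal_mul, inner_self_re]
    have r2 : (c^2 * ⟪B j j u, u⟫_ℂ).re = t^2 * (⟪B j j u, u⟫_ℂ).re := by
      rw [hc, ← Complex.ofReal_pow, Complex.re_ofReal_mul]
    rw [r1, r2] at h
    linarith
  have hBuu : (⟪B j j u, u⟫_ℂ).re ≤ ‖B j j‖ * ‖u‖^2 := by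
    calc (⟪B j j u, u⟫_ℂ).re ≤ ‖⟪B j j u, u⟫_ℂ‖ := Complex.re_le_norm _
      _ ≤ ‖B j j u‖ * ‖u‖ := norm_inner_le_norm _ _
      _ ≤ (‖B j j‖ * ‖u‖) * ‖u‖ := by
          have := (B j j).le_opNorm u
          nlinarith [norm_nonneg u]
      _ = ‖B j j‖ * ‖u‖^2 := by ring
  have key2 : ∀ t : ℝ, 0 ≤ t → 0 ≤ (⟪B k k y, y⟫_ℂ).re - 2 * t * ‖u‖^2
      + t^2 * (‖B j j‖ * ‖u‖^2) := by
    intro t ht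
    have := key t
    nlinarith [sq_nonneg t]
  have claim : ‖u‖^2 ≤ ‖B j j‖ * (⟪B k k y, y⟫_ℂ).re := by
    set α := (⟪B k k y, y⟫_ℂ).re with hα
    set γ := ‖B j j‖ with hγ
    have hα0 : 0 ≤ α := diag_re_nonneg B hSA hPos k y
    have hγ0 : 0 ≤ γ := norm_nonneg _
    by_contra hlt
    push_neg at hlt
    have hβ0 : 0 < ‖u‖^2 := lt_of_le_of_lt (by positivity) hlt
    rcases eq_or_lt_of_le hγ0 with hγz | hγp
    · have h := key2 ((α + ‖u‖^2)/(2*‖u‖^2)) (by positivity)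
      rw [← hγz] at h
      have h2 : (α + ‖u‖^2)/(2*‖u‖^2) * (2 * ‖u‖^2) = α + ‖u‖^2 := by
        exact div_mul_cancel₀ _ (mul_pos two_pos hβ0).ne'
      nlinarith
    · have h := key2 (1/γ) (by positivity)
      have hinv : (1/γ)^2 * (γ * ‖u‖^2) = (1/γ) * ‖u‖^2 := by
        field_simp
      rw [hinv] at h
      have h4 : (1/γ) * ‖u‖^2 ≤ α := by linarith
      have h5 : γ * ((1/γ) * ‖u‖^2) = ‖u‖^2 := by field_simp
      have h6 := mul_le_mul_of_nonneg_left h4 hγp.le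
      rw [h5] at h6
      linarith
  have hsq : (⟪B k k y, y⟫_ℂ).re = ‖CFC.sqrt (B k k) y‖ ^ 2 :=
    sqrt_norm_sq (B k k) (diag_isPositive B hSA hPos k) y
  rw [hsq] at claim
  have h2 : ‖u‖^2 ≤ (Real.sqrt ‖B j j‖ * ‖CFC.sqrt (B k k) y‖)^2 := by
    rw [mul_pow, Real.sq_sqrt (norm_nonneg _)]
    exact claim
  have := Real.sqrt_le_sqrt h2
  rwa [Real.sqrt_sq (norm_nonneg _), Real.sqrt_sq (by positivity)] at this

/-- one peeling step -/
noncomputable def peelM (k : Fin n) (B : ∀ i j, H j →L[ℂ] H i) : ∀ i j, H j →L[ℂ] H i :=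
  fun i j => B i j - (dsol (CFC.sqrt (B k k)) (B k i)).adjoint ∘L
    (dsol (CFC.sqrt (B k k)) (B k j))

section PeelFacts

variable (B : ∀ i j, H j →L[ℂ] H i) (k : Fin n)

theorem peel_comp (hSA : ∀ i j, (B i j).adjoint = B j i) (hPos : ∀ v, 0 ≤ blockQF B v)
    (j : Fin n) :
    CFC.sqrt (B k k) ∘L dsol (CFC.sqrt (B k k)) (B k j) = B k j ∧
      ∀ x, dsol (CFC.sqrt (B k k)) (B k j) x ∈ rcl (CFC.sqrt (B k k)) :=
  dsol_spec _ (sqrt_selfAdjoint _) _ (Real.sqrt ‖B j j‖) (offdiag_bound B hSA hPos k j)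

theorem peel_diag (hSA : ∀ i j, (B i j).adjoint = B j i) (hPos : ∀ v, 0 ≤ blockQF B v) :
    dsol (CFC.sqrt (B k k)) (B k k) = CFC.sqrt (B k k) :=
  dsol_diag (B k k) (diag_isPositive B hSA hPos k)

theorem peel_qf (v : ∀ i, H i) :
    blockQF (peelM k B) v = blockQF B v
      - ‖∑ j, dsol (CFC.sqrt (B k k)) (B k j) (v j)‖ ^ 2 := by
  have h1 : blockQF (peelM k B) v
      = blockQF B v - blockQF (fun i j => (dsol (CFC.sqrt (B k k)) (B k i)).adjoint ∘L
        (dsol (CFC.sqrt (B k k)) (B k j))) v := blockQF_sub _ _ v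
  rw [h1, blockQF_rowTerm]

theorem peel_row_le (hSA : ∀ i j, (B i j).adjoint = B j i) (hPos : ∀ v, 0 ≤ blockQF B v)
    (v : ∀ i, H i) :
    ‖∑ j, dsol (CFC.sqrt (B k k)) (B k j) (v j)‖ ^ 2 ≤ blockQF B v := by
  set s := CFC.sqrt (B k k) with hs
  set C := fun j => dsol s (B k j) with hC
  set u := ∑ j, C j (v j) with hudef
  have humem : u ∈ rcl s := by
    rw [hudef]
    exact Submodule.sum_mem _ fun j _ => (peel_comp B k hSA hPos j).2 (v j)
  refine le_of_forall_pos_le_add fun ε hε => ?_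
  obtain ⟨x, hx⟩ := rcl_approx s humem (Real.sqrt_pos.mpr hε)
  have h := hPos (fun i => v i - Pi.single k x i)
  rw [blockQF_sub_single B hSA v k x] at h
  have hsum : ∑ j, ⟪B k j (v j), x⟫_ℂ = ⟪u, s x⟫_ℂ := by
    have hterm : ∀ j, ⟪B k j (v j), x⟫_ℂ = ⟪C j (v j), s x⟫_ℂ := by
      intro j
      rw [← (peel_comp B k hSA hPos j).1]
      rw [ContinuousLinearMap.comp_apply]
      nth_rewrite 1 [← (sqrt_selfAdjoint (B k k)).adjoint_eq]
      exact ContinuousLinearMap.adjoint_inner_left _ _ _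
    rw [Finset.sum_congr rfl fun j _ => hterm j, ← sum_inner]
  have hdiag : (⟪B k k x, x⟫_ℂ).re = ‖s x‖ ^ 2 :=
    sqrt_norm_sq (B k k) (diag_isPositive B hSA hPos k) x
  rw [hsum, hdiag] at h
  have hexp : ‖u - s x‖^2 = ‖u‖^2 - 2 * (⟪u, s x⟫_ℂ).re + ‖s x‖^2 := by
    have := norm_sub_sq (𝕜 := ℂ) u (s x)
    simpa using this
  have hlt : ‖u - s x‖^2 ≤ ε := by
    have h1 : ‖u - s x‖ ≤ Real.sqrt ε := by
      rw [norm_sub_rev]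
      exact hx.le
    have h2 : ‖u - s x‖^2 ≤ (Real.sqrt ε)^2 := by
      exact pow_le_pow_left₀ (norm_nonneg _) h1 2
    rwa [Real.sq_sqrt hε.le] at h2
  nlinarith [h, hexp, hlt]

theorem peel_pos (hSA : ∀ i j, (B i j).adjoint = B j i) (hPos : ∀ v, 0 ≤ blockQF B v)
    (v : ∀ i, H i) : 0 ≤ blockQF (peelM k B) v := by
  rw [peel_qf]
  have := peel_row_le B k hSA hPos v
  linarith

theorem peel_sa (hSA : ∀ i j, (B i j).adjoint = B j i) (i j : Fin n) :
    (peelM k B i j).adjoint = peelM k B j i := by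
  unfold peelM
  rw [map_sub, hSA i j, ContinuousLinearMap.adjoint_comp,
    ContinuousLinearMap.adjoint_adjoint]

theorem peel_row (hSA : ∀ i j, (B i j).adjoint = B j i) (hPos : ∀ v, 0 ≤ blockQF B v)
    (j : Fin n) : peelM k B k j = 0 := by
  unfold peelM
  rw [peel_diag B k hSA hPos, (sqrt_selfAdjoint (B k k)).adjoint_eq,
    (peel_comp B k hSA hPos j).1, sub_self]

theorem peel_col (hSA : ∀ i j, (B i j).adjoint = B j i) (hPos : ∀ v, 0 ≤ blockQF B v)
    (i : Fin n) : peelM k B i k = 0 := by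
  have h1 : (peelM k B i k).adjoint = peelM k B k i := peel_sa B k hSA i k
  rw [peel_row B k hSA hPos i] at h1
  have := congrArg ContinuousLinearMap.adjoint h1
  rwa [ContinuousLinearMap.adjoint_adjoint, map_zero] at this

theorem peel_zero_col (hj : B k k = B k k) {j : Fin n} (hz : B k j = 0) :
    dsol (CFC.sqrt (B k k)) (B k j) = 0 := by
  rw [hz]
  exact dsol_zero _ (sqrt_selfAdjoint _)

end PeelFacts

/-- iterated peeling from the bottom row up -/
noncomputable def chF (A : ∀ i j, H j →L[ℂ] H i) : ℕ → ∀ i j, H j →L[ℂ] H i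
  | 0 => A
  | (m+1) => if h : n - 1 - m < n then peelM ⟨n - 1 - m, h⟩ (chF A m) else chF A m

/-- the Cholesky factor -/
noncomputable def chP (A : ∀ i j, H j →L[ℂ] H i) (l j : Fin n) : H j →L[ℂ] H l :=
  dsol (CFC.sqrt (chF A (n - 1 - l.val) l l)) (chF A (n - 1 - l.val) l j)

theorem chF_inv (A : ∀ i j, H j →L[ℂ] H i) (hA : BlockPosSD A) (m : ℕ) :
    (∀ i j, (chF A m i j).adjoint = chF A m j i) ∧ (∀ v, 0 ≤ blockQF (chF A m) v) ∧
      (∀ i j : Fin n, n - m ≤ i.val ∨ n - m ≤ j.val → chF A m i j = 0) := by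
  induction m with
  | zero =>
    refine ⟨hA.1, hA.2, fun i j hij => ?_⟩
    rcases hij with h | h
    · exact absurd i.isLt (by omega)
    · exact absurd j.isLt (by omega)
  | succ m ih =>
    obtain ⟨sa, pos, supp⟩ := ih
    by_cases h : n - 1 - m < n
    · have hstep : chF A (m+1) = peelM ⟨n - 1 - m, h⟩ (chF A m) := by
        rw [chF, dif_pos h]
      set k : Fin n := ⟨n - 1 - m, h⟩ with hk
      rw [hstep]
      refine ⟨peel_sa _ k sa, peel_pos _ k sa pos, ?_⟩
      intro i j hij
      rcases hij with hi | hj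
      · by_cases hik : i = k
        · subst hik
          exact peel_row _ k sa pos j
        · have hival : n - m ≤ i.val := by
            have : i.val ≠ n - 1 - m := fun hc => hik (Fin.ext hc)
            omega
          have hBij : chF A m i j = 0 := supp i j (Or.inl hival)
          have hBki : chF A m k i = 0 := by
            have h1 : chF A m i k = 0 := supp i k (Or.inl hival)
            rw [← sa i k, h1, map_zero]
          show chF A m i j - _ = 0
          rw [hBij, peel_zero_col _ k rfl hBki, map_zero, ContinuousLinearMap.zero_comp,
            sub_zero]
      · by_cases hjk : j = k
        · subst hjk
          exact peel_col _ k sa pos i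
        · have hjval : n - m ≤ j.val := by
            have : j.val ≠ n - 1 - m := fun hc => hjk (Fin.ext hc)
            omega
          have hBij : chF A m i j = 0 := supp i j (Or.inr hjval)
          have hBkj : chF A m k j = 0 := by
            have h1 : chF A m j k = 0 := supp j k (Or.inl hjval)
            rw [← sa j k, h1, map_zero]
          show chF A m i j - _ = 0
          rw [hBij, peel_zero_col _ k rfl hBkj, ContinuousLinearMap.comp_zero, sub_zero]
    · have hn : n = 0 := by omega
      subst hn
      have hstep : chF A (m+1) = chF A m := by rw [chF, dif_neg h]
      rw [hstep]
      exact ⟨sa, pos, fun i j _ => i.elim0⟩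



section Chol2
variable (A : ∀ i j, H j →L[ℂ] H i)


theorem chP_spec (hA : BlockPosSD A) (l j : Fin n) :
    CFC.sqrt (chF A (n - 1 - l.val) l l) ∘L chP A l j = chF A (n - 1 - l.val) l j ∧
      ∀ x, chP A l j x ∈ rcl (CFC.sqrt (chF A (n - 1 - l.val) l l)) := by
  obtain ⟨sa, pos, _⟩ := chF_inv A hA (n - 1 - l.val)
  exact peel_comp _ l sa pos j

theorem chP_diag (hA : BlockPosSD A) (l : Fin n) :
    chP A l l = CFC.sqrt (chF A (n - 1 - l.val) l l) := by
  obtain ⟨sa, pos, _⟩ := chF_inv A hA (n - 1 - l.val)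
  exact peel_diag _ l sa pos

theorem chP_tri (hA : BlockPosSD A) (i j : Fin n) (hij : i < j) : chP A i j = 0 := by
  obtain ⟨_, _, supp⟩ := chF_inv A hA (n - 1 - i.val)
  have hz : chF A (n - 1 - i.val) i j = 0 := by
    refine supp i j (Or.inr ?_)
    have h1 : i.val < n := i.isLt
    have h2 : i.val < j.val := hij
    omega
  unfold chP
  rw [hz]
  exact dsol_zero _ (sqrt_selfAdjoint _)

theorem chP_mem (hA : BlockPosSD A) (l j : Fin n) (x : H j) :
    chP A l j x ∈ rcl (chP A l l) := by
  rw [chP_diag A hA l]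
  exact (chP_spec A hA l j).2 x

theorem chF_step (l : Fin n) (i j : Fin n) :
    chF A (n - 1 - l.val + 1) i j
      = chF A (n - 1 - l.val) i j - (chP A l i).adjoint ∘L chP A l j := by
  have h : n - 1 - (n - 1 - l.val) < n := by
    have := l.isLt; omega
  have hk : (⟨n - 1 - (n - 1 - l.val), h⟩ : Fin n) = l := by
    apply Fin.ext
    have := l.isLt
    simp only []
    omega
  show (if h' : n - 1 - (n - 1 - l.val) < n then
      peelM ⟨n - 1 - (n - 1 - l.val), h'⟩ (chF A (n - 1 - l.val)) else chF A (n - 1 - l.val)) i j = _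
  rw [dif_pos h, hk]
  rfl

theorem chF_telescope (m : ℕ) (hm : m ≤ n) (i j : Fin n) :
    A i j = chF A m i j + ∑ l ∈ Finset.univ.filter (fun l : Fin n => n - m ≤ l.val),
      (chP A l i).adjoint ∘L chP A l j := by
  induction m with
  | zero =>
    have hfil : Finset.univ.filter (fun l : Fin n => n - 0 ≤ l.val) = ∅ :=
      Finset.filter_false_of_mem (fun l _ => by have := l.isLt; omega)
    rw [hfil, Finset.sum_empty, add_zero]
    rfl
  | succ m ih =>
    have hmn : m < n := by omega
    have hl₀ : n - 1 - m < n := by omega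
    set l₀ : Fin n := ⟨n - 1 - m, hl₀⟩ with hl₀def
    have e1 := ih (by omega)
    have hval : n - 1 - (l₀ : ℕ) = m := by
      have : (l₀ : ℕ) = n - 1 - m := rfl
      omega
    have e2 : chF A m i j = chF A (m + 1) i j + (chP A l₀ i).adjoint ∘L chP A l₀ j := by
      have h3 := chF_step A l₀ i j
      rw [hval] at h3
      rw [h3]
      abel
    have hnotmem : l₀ ∉ Finset.univ.filter (fun l : Fin n => n - m ≤ l.val) := by
      simp only [Finset.mem_filter, Finset.mem_univ, true_and]
      show ¬ (n - m ≤ n - 1 - m)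
      omega
    have hfil : Finset.univ.filter (fun l : Fin n => n - (m + 1) ≤ l.val)
        = insert l₀ (Finset.univ.filter (fun l : Fin n => n - m ≤ l.val)) := by
      ext l
      simp only [Finset.mem_filter, Finset.mem_univ, true_and, Finset.mem_insert,
        Fin.ext_iff]
      show n - (m+1) ≤ l.val ↔ (l : ℕ) = n - 1 - m ∨ n - m ≤ l.val
      omega
    rw [hfil, Finset.sum_insert hnotmem, e1, e2]
    abel

theorem chF_final (hA : BlockPosSD A) (i j : Fin n) : chF A n i j = 0 := by
  obtain ⟨_, _, supp⟩ := chF_inv A hA n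
  exact supp i j (Or.inl (by omega))

theorem chol_decomp (hA : BlockPosSD A) (i j : Fin n) :
    A i j = ∑ l, (chP A l i).adjoint ∘L chP A l j := by
  have h := chF_telescope A n le_rfl i j
  rw [chF_final A hA i j, zero_add] at h
  rw [h]
  congr 1
  apply Finset.filter_true_of_mem
  intro l _
  omega

theorem schur_eq (hA : BlockPosSD A) (k : Fin n) (i j : Fin n) :
    (∑ l ∈ Finset.univ.filter (fun l : Fin n => l ≤ k), (chP A l i).adjoint ∘L chP A l j)
      = chF A (n - 1 - k.val) i j := by
  have hkn : (k : ℕ) < n := k.isLt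
  have t1 := chF_telescope A (n - 1 - k.val) (by omega) i j
  have t2 := chol_decomp A hA i j
  have hfil : Finset.univ.filter (fun l : Fin n => ¬ l ≤ k)
      = Finset.univ.filter (fun l : Fin n => n - (n - 1 - k.val) ≤ l.val) := by
    ext l
    simp only [Finset.mem_filter, Finset.mem_univ, true_and, Fin.le_def, not_le]
    omega
  rw [← hfil] at t1
  have hsplit := Finset.sum_filter_add_sum_filter_not Finset.univ (fun l : Fin n => l ≤ k)
    (fun l => (chP A l i).adjoint ∘L chP A l j)
  have h1 : (∑ l ∈ Finset.univ.filter (fun l : Fin n => l ≤ k),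
      (chP A l i).adjoint ∘L chP A l j)
      + ∑ l ∈ Finset.univ.filter (fun l : Fin n => ¬ l ≤ k),
      (chP A l i).adjoint ∘L chP A l j = A i j := hsplit.trans t2.symm
  have h2 := h1.trans t1
  exact add_right_cancel h2

end Chol2


section Chol3
variable (A : ∀ i j, H j →L[ℂ] H i)


theorem blockQF_agree (X : ∀ i j, H j →L[ℂ] H i) (k : Fin n)
    (hsupp : ∀ i j, ¬ i ≤ k ∨ ¬ j ≤ k → X i j = 0) (v w : ∀ i, H i)
    (hag : ∀ j, j ≤ k → w j = v j) : blockQF X w = blockQF X v := by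
  unfold blockQF
  refine Finset.sum_congr rfl fun i _ => Finset.sum_congr rfl fun j _ => ?_
  by_cases hi : i ≤ k
  · by_cases hj : j ≤ k
    · rw [hag j hj, hag i hi]
    · rw [hsupp i j (Or.inr hj)]; simp
  · rw [hsupp i j (Or.inl hi)]; simp

theorem row_approx (hA : BlockPosSD A) (k : Fin n) (v : ∀ i, H i) {δ : ℝ} (hδ : 0 < δ) :
    ∃ w : ∀ i, H i, (∀ j, j ≤ k → w j = v j) ∧
      ∀ l : Fin n, k < l → ‖∑ j, chP A l j (w j)‖ < δ := by
  classical
  have claim : ∀ t : ℕ, ∃ w : ∀ i, H i, (∀ j, j ≤ k → w j = v j) ∧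
      (∀ j : Fin n, k.val + t < j.val → w j = 0) ∧
      (∀ l : Fin n, k < l → l.val ≤ k.val + t → ‖∑ j, chP A l j (w j)‖ < δ) := by
    intro t
    induction t with
    | zero =>
      refine ⟨fun j => if h : j ≤ k then v j else 0, fun j hj => dif_pos hj,
        fun j hj => dif_neg (fun hc => by
          rw [Fin.le_def] at hc; omega), fun l hl hl2 => ?_⟩
      rw [Fin.lt_def] at hl
      omega
    | succ t ih =>
      obtain ⟨w, hw1, hw2, hw3⟩ := ih
      by_cases h : k.val + t + 1 < n
      · set l₀ : Fin n := ⟨k.val + t + 1, h⟩ with hl₀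
        set u := ∑ j, chP A l₀ j (w j) with hu
        have humem : u ∈ rcl (chP A l₀ l₀) :=
          Submodule.sum_mem _ fun j _ => chP_mem A hA l₀ j (w j)
        obtain ⟨x, hx⟩ := rcl_approx _ (neg_mem humem) hδ
        have hwl₀ : w l₀ = 0 := hw2 l₀ (by show k.val + t < k.val + t + 1; omega)
        refine ⟨Function.update w l₀ x, ?_, ?_, ?_⟩
        · intro j hj
          rw [Function.update_of_ne (fun hc : j = l₀ => by
            rw [Fin.le_def] at hj
            have : j.val = k.val + t + 1 := by rw [hc]
            omega), hw1 j hj]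
        · intro j hj
          have hne : j ≠ l₀ := fun hc => by
            have : j.val = k.val + t + 1 := by rw [hc]
            omega
          rw [Function.update_of_ne hne]
          exact hw2 j (by omega)
        · intro l hl hl2
          by_cases hll : l = l₀
          · subst hll
            have hdiff : ∑ j, chP A l₀ j (Function.update w l₀ x j) - ∑ j, chP A l₀ j (w j)
                = chP A l₀ l₀ x - chP A l₀ l₀ (w l₀) := by
              rw [← Finset.sum_sub_distrib]
              rw [Finset.sum_eq_single l₀ (fun j _ hne => by
                rw [Function.update_of_ne hne, sub_self]) (by simp)]
              rw [Function.update_self]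
            rw [hwl₀, map_zero, sub_zero] at hdiff
            have hsum : ∑ j, chP A l₀ j (Function.update w l₀ x j) = u + chP A l₀ l₀ x := by
              have h9 := sub_eq_iff_eq_add.mp hdiff
              rw [h9, ← hu, add_comm]
            rw [hsum]
            calc ‖u + chP A l₀ l₀ x‖ = ‖chP A l₀ l₀ x - (-u)‖ := by
                  rw [sub_neg_eq_add, add_comm]
              _ < δ := hx
          · have hlval : l.val ≤ k.val + t := by
              have : l.val ≠ k.val + t + 1 := fun hc => hll (Fin.ext hc)
              omega
            have hsum : ∑ j, chP A l j (Function.update w l₀ x j) = ∑ j, chP A l j (w j) := by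
              refine Finset.sum_congr rfl fun j _ => ?_
              by_cases hj : j = l₀
              · subst hj
                have hPl : chP A l l₀ = 0 := chP_tri A hA l l₀ (by
                  rw [Fin.lt_def]
                  show l.val < k.val + t + 1
                  omega)
                rw [hPl]
                simp
              · rw [Function.update_of_ne hj]
            rw [hsum]
            exact hw3 l hl hlval
      · refine ⟨w, hw1, fun j hj => hw2 j (by omega),
          fun l hl hl2 => hw3 l hl (by have := l.isLt; omega)⟩
  obtain ⟨w, hw1, _, hw3⟩ := claim n
  exact ⟨w, hw1, fun l hl => hw3 l hl (by have := l.isLt; omega)⟩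

theorem range_approx (hA : BlockPosSD A) (w : ∀ i, H i)
    (hw : ∀ i, w i ∈ rcl (chP A i i)) {δ : ℝ} (hδ : 0 < δ) :
    ∃ v : ∀ i, H i, ∀ i, ‖∑ j, chP A i j (v j) - w i‖ < δ := by
  classical
  have claim : ∀ t : ℕ, ∃ v : ∀ i, H i, (∀ j : Fin n, t ≤ j.val → v j = 0) ∧
      ∀ i : Fin n, i.val < t → ‖∑ j, chP A i j (v j) - w i‖ < δ := by
    intro t
    induction t with
    | zero => exact ⟨0, fun j _ => rfl, fun i hi => absurd hi (by omega)⟩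
    | succ t ih =>
      obtain ⟨v, hv1, hv2⟩ := ih
      by_cases h : t < n
      · set i₀ : Fin n := ⟨t, h⟩ with hi₀
        set z := w i₀ - ∑ j, chP A i₀ j (v j) with hz
        have hzmem : z ∈ rcl (chP A i₀ i₀) :=
          sub_mem (hw i₀) (Submodule.sum_mem _ fun j _ => chP_mem A hA i₀ j (v j))
        obtain ⟨x, hx⟩ := rcl_approx _ hzmem hδ
        have hvi₀ : v i₀ = 0 := hv1 i₀ (le_refl t)
        refine ⟨Function.update v i₀ x, ?_, ?_⟩
        · intro j hj
          have hne : j ≠ i₀ := fun hc => by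
            have : j.val = t := by rw [hc]
            omega
          rw [Function.update_of_ne hne]
          exact hv1 j (by omega)
        · intro i hi
          by_cases hii : i = i₀
          · subst hii
            have hdiff : ∑ j, chP A i₀ j (Function.update v i₀ x j) - ∑ j, chP A i₀ j (v j)
                = chP A i₀ i₀ x - chP A i₀ i₀ (v i₀) := by
              rw [← Finset.sum_sub_distrib]
              rw [Finset.sum_eq_single i₀ (fun j _ hne => by
                rw [Function.update_of_ne hne, sub_self]) (by simp)]
              rw [Function.update_self]
            rw [hvi₀, map_zero, sub_zero] at hdiff
            have hsum : ∑ j, chP A i₀ j (Function.update v i₀ x j)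
                = ∑ j, chP A i₀ j (v j) + chP A i₀ i₀ x := by
              have h9 := sub_eq_iff_eq_add.mp hdiff
              rw [h9, add_comm]
            rw [hsum]
            have h8 : ∑ j, chP A i₀ j (v j) + chP A i₀ i₀ x - w i₀ = chP A i₀ i₀ x - z := by
              rw [hz]; abel
            rw [h8]
            exact hx
          · have hival : i.val < t := by
              have : i.val ≠ t := fun hc => hii (Fin.ext hc)
              omega
            have hsum : ∑ j, chP A i j (Function.update v i₀ x j) = ∑ j, chP A i j (v j) := by
              refine Finset.sum_congr rfl fun j _ => ?_
              by_cases hj : j = i₀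
              · subst hj
                have hPl : chP A i i₀ = 0 := chP_tri A hA i i₀ (by
                  rw [Fin.lt_def]
                  show i.val < t
                  omega)
                rw [hPl]
                simp
              · rw [Function.update_of_ne hj]
            rw [hsum]
            exact hv2 i hival
      · exact ⟨v, fun j hj => hv1 j (by omega),
          fun i hi => hv2 i (by have := i.isLt; omega)⟩
  obtain ⟨v, _, hv2⟩ := claim n
  exact ⟨v, fun i => hv2 i i.isLt⟩

end Chol3


/-- Cholesky decomposition `M = P*P` with lower triangular `P` compatible with all
leading Schur complements, whose range decomposes as the direct sum of the closures of
the ranges of the diagonal entries. -/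
theorem cholesky_compatible_with_schur (A : ∀ i j : Fin n, H j →L[ℂ] H i)
    (hA : BlockPosSD A) :
    ∃ P : ∀ i j : Fin n, H j →L[ℂ] H i,
      (∀ i j, i < j → P i j = 0) ∧
      (∀ i j, A i j = ∑ l, (P l i).adjoint ∘L (P l j)) ∧
      (∀ k : Fin n, IsSchurBlock A {i | i ≤ k}
        (fun i j => ∑ l ∈ Finset.univ.filter (fun l => l ≤ k),
          (P l i).adjoint ∘L (P l j))) ∧
      closure (Set.range (fun v : (∀ i, H i) => fun i => ∑ j, P i j (v j))) =
        {w : ∀ i, H i | ∀ i, w i ∈ closure (Set.range (P i i))} := by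
  classical
  refine ⟨chP A, fun i j hij => chP_tri A hA i j hij, fun i j => chol_decomp A hA i j, ?_, ?_⟩
  · -- Schur complements
    intro k
    set S : ∀ i j : Fin n, H j →L[ℂ] H i := fun i j =>
      ∑ l ∈ Finset.univ.filter (fun l => l ≤ k), (chP A l i).adjoint ∘L (chP A l j) with hSdef
    have hkn : (k : ℕ) < n := k.isLt
    set m : ℕ := n - 1 - k.val with hm
    obtain ⟨sa, pos, supp⟩ := chF_inv A hA m
    have hSF : ∀ i j, S i j = chF A m i j := fun i j => schur_eq A hA k i j
    have hksupp : ∀ i j : Fin n, (¬ i ≤ k) ∨ (¬ j ≤ k) → chF A m i j = 0 := by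
      intro i j hij
      rcases hij with hi | hj
      · refine supp i j (Or.inl ?_)
        rw [Fin.le_def, not_le] at hi
        omega
      · refine supp i j (Or.inr ?_)
        rw [Fin.le_def, not_le] at hj
        omega
    have hSsupp : ∀ i j : Fin n, (¬ i ≤ k) ∨ (¬ j ≤ k) → S i j = 0 := fun i j hij => by
      rw [hSF i j]; exact hksupp i j hij
    have hAS : ∀ i j, A i j - S i j
        = ∑ l ∈ Finset.univ.filter (fun l : Fin n => n - m ≤ l.val),
          (chP A l i).adjoint ∘L chP A l j := by
      intro i j
      have t1 := chF_telescope A m (by omega) i j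
      rw [← hSF i j] at t1
      rw [t1]
      abel
    refine ⟨⟨?_, ?_⟩, ?_, ⟨?_, ?_⟩, ?_⟩
    · -- S selfadjoint
      intro i j
      show (S i j).adjoint = S j i
      rw [hSF i j, hSF j i]
      exact sa i j
    · -- S positive
      intro v
      show 0 ≤ blockQF S v
      rw [blockQF_congr hSF v]
      exact pos v
    · -- support
      intro i j hij
      exact hSsupp i j hij
    · -- A - S selfadjoint
      intro i j
      show (A i j - S i j).adjoint = A j i - S j i
      rw [map_sub, hA.1 i j]
      congr 1
      rw [hSF i j, hSF j i]
      exact sa i j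
    · -- A - S positive
      intro v
      show 0 ≤ blockQF (fun i j => A i j - S i j) v
      rw [blockQF_congr hAS v, blockQF_sum]
      refine Finset.sum_nonneg fun l _ => ?_
      rw [blockQF_rowTerm]
      positivity
    · -- maximality
      intro X hX hXsupp hXA v
      show blockQF X v ≤ blockQF S v
      refine le_of_forall_pos_le_add fun ε hε => ?_
      set δ : ℝ := Real.sqrt (ε / (n + 1)) with hδdef
      have hδ : 0 < δ := Real.sqrt_pos.mpr (by positivity)
      obtain ⟨w, hw1, hw2⟩ := row_approx A hA k v hδ
      have hXsupp' : ∀ i j : Fin n, (¬ i ≤ k) ∨ (¬ j ≤ k) → X i j = 0 := fun i j hij =>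
        hXsupp i j hij
      have hXv : blockQF X v = blockQF X w := (blockQF_agree X k hXsupp' v w hw1).symm
      have hXw : blockQF X w ≤ blockQF A w := by
        have h0 := hXA.2 w
        rw [blockQF_sub] at h0
        linarith
      have hAw : blockQF A w = blockQF S w + blockQF (fun i j => A i j - S i j) w := by
        have := blockQF_sub A S w
        linarith
      have hSw : blockQF S w = blockQF S v := blockQF_agree S k hSsupp v w hw1
      have hrem : blockQF (fun i j => A i j - S i j) w ≤ ε := by
        rw [blockQF_congr hAS w, blockQF_sum]
        have hbound : ∀ l ∈ Finset.univ.filter (fun l : Fin n => n - m ≤ l.val),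
            blockQF (fun i j => (chP A l i).adjoint ∘L chP A l j) w ≤ δ^2 := by
          intro l hl
          rw [Finset.mem_filter] at hl
          have hkl : k < l := by
            rw [Fin.lt_def]
            omega
          rw [blockQF_rowTerm]
          have := hw2 l hkl
          exact pow_le_pow_left₀ (norm_nonneg _) this.le 2
        calc ∑ l ∈ Finset.univ.filter (fun l : Fin n => n - m ≤ l.val),
              blockQF (fun i j => (chP A l i).adjoint ∘L chP A l j) w
            ≤ ∑ _l ∈ Finset.univ.filter (fun l : Fin n => n - m ≤ l.val), δ^2 :=
              Finset.sum_le_sum hbound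
          _ = (Finset.univ.filter (fun l : Fin n => n - m ≤ l.val)).card * δ^2 := by
              rw [Finset.sum_const, nsmul_eq_mul]
          _ ≤ n * δ^2 := by
              have hcard : (Finset.univ.filter (fun l : Fin n => n - m ≤ l.val)).card ≤ n := by
                calc _ ≤ Finset.univ.card := Finset.card_filter_le _ _
                  _ = n := by simp
              have : ((Finset.univ.filter (fun l : Fin n => n - m ≤ l.val)).card : ℝ) ≤ n := by
                exact_mod_cast hcard
              nlinarith [sq_nonneg δ]
          _ ≤ ε := by
              rw [hδdef, Real.sq_sqrt (by positivity : (0:ℝ) ≤ ε / (n + 1))]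
              rw [mul_comm, div_mul_eq_mul_div, div_le_iff₀ (by positivity : (0:ℝ) < n + 1)]
              nlinarith
      linarith
  · -- range condition
    apply Set.Subset.antisymm
    · have hsub : Set.range (fun v : (∀ i, H i) => fun i => ∑ j, chP A i j (v j))
          ⊆ {w : ∀ i, H i | ∀ i, w i ∈ closure (Set.range (chP A i i))} := by
        rintro _ ⟨v, rfl⟩ i
        have hmem : (∑ j, chP A i j (v j)) ∈ rcl (chP A i i) :=
          Submodule.sum_mem _ fun j _ => chP_mem A hA i j (v j)
        show (∑ j, chP A i j (v j)) ∈ closure (Set.range ⇑(chP A i i))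
        rw [← rcl_coe]
        exact hmem
      have hclosed : IsClosed {w : ∀ i, H i | ∀ i, w i ∈ closure (Set.range (chP A i i))} := by
        have heq : {w : ∀ i, H i | ∀ i, w i ∈ closure (Set.range (chP A i i))}
            = Set.univ.pi (fun i => closure (Set.range (chP A i i))) := by
          ext w
          simp [Set.mem_pi]
        rw [heq]
        exact isClosed_set_pi fun i _ => isClosed_closure
      exact closure_minimal hsub hclosed
    · intro w hw
      have hw' : ∀ i, w i ∈ rcl (chP A i i) := fun i => by
        have h2 : w i ∈ (rcl (chP A i i) : Set (H i)) := by
          rw [rcl_coe]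
          exact hw i
        exact h2
      rw [Metric.mem_closure_iff]
      intro ε hε
      obtain ⟨v, hv⟩ := range_approx A hA w hw' hε
      refine ⟨_, ⟨v, rfl⟩, ?_⟩
      rw [dist_pi_lt_iff hε]
      intro i
      rw [dist_eq_norm, norm_sub_rev]
      exact hv i


end
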